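/- Let f : ℝ^m → ℝ^m be continuous, injective, and autoregressive with each component f_i strictly increasing in x_i. Then f is a homeomorphism onto its image, and its inverse g is also autoregressive (the i-th component of g(y) depends only on y₁,…,y_i). -/

import Mathlib

open Set Function

/-!
By induction along the order of the coordinates: once the coordinates `j < i` of a point are
known, its `i`-th image coordinate `t ↦ f (update x i t) i` is a strictly increasing function
of the single unknown `x i`. Hence `x i` is determined by `(f x) j` for `j ≤ i`, which gives
injectivity and the autoregressive inverse. For continuity, `x i > a` is equivalent to
`f (update x i a) i < f x i`, an open condition in the image point once the lower coordinates
of the inverse are known to be continuous; similarly for `x i < b`.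
-/

variable {ι α β : Type*} [LinearOrder ι]

def IsAutoregressive (f : (ι → α) → (ι → β)) : Prop :=
  ∀ x y i, (∀ j ≤ i, x j = y j) → f x i = f y i

def StrictMonoInOwnCoord [Preorder α] [Preorder β] (f : (ι → α) → (ι → β)) : Prop :=
  ∀ x i, StrictMono fun t => f (update x i t) i

namespace IsAutoregressive

variable {f : (ι → α) → (ι → β)}

theorem eq_of_forall_le_apply_eq [WellFoundedLT ι] [LinearOrder α] [Preorder β]
    (hf : IsAutoregressive f) (hmono : StrictMonoInOwnCoord f) {x x' : ι → α} (i : ι)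
    (h : ∀ j ≤ i, f x j = f x' j) : x i = x' i := by
  induction i using WellFoundedLT.induction with
  | _ i ih =>
  have hlt : ∀ j < i, x j = x' j := fun j hj => ih j hj fun k hk => h k (hk.trans hj.le)
  refine (hmono x i).injective ?_
  simp only [update_eq_self, h i le_rfl]
  refine hf _ _ i fun j hj => ?_
  rcases hj.lt_or_eq with hj | rfl
  · rw [update_of_ne hj.ne, hlt j hj]
  · rw [update_self]

theorem injective [WellFoundedLT ι] [LinearOrder α] [Preorder β]
    (hf : IsAutoregressive f) (hmono : StrictMonoInOwnCoord f) : Injective f :=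
  fun _ _ h => funext fun i => hf.eq_of_forall_le_apply_eq hmono i fun j _ => congrFun h j

variable [TopologicalSpace α] [TopologicalSpace β] {Y : Type*} [TopologicalSpace Y]

theorem continuous_apply_update (hf : IsAutoregressive f) (hcont : Continuous f)
    {g : Y → ι → α} {i : ι} (hg : ∀ j < i, Continuous fun y => g y j) (t : α) :
    Continuous fun y => f (update (g y) i t) i := by
  -- The coordinates above `i` cannot affect the `i`-th output, so they may be frozen at `t`.
  have hlower : Continuous fun y (j : ι) => if j < i then g y j else t :=
    continuous_pi fun j => by
      split_ifs with hj
      exacts [hg j hj, continuous_const]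
  refine ((continuous_apply i).comp (hcont.comp hlower)).congr fun y => hf _ _ i fun j hj => ?_
  rcases hj.lt_or_eq with hj | rfl
  · simp [hj, update_of_ne hj.ne]
  · simp

theorem continuous_of_continuous_comp [WellFoundedLT ι] [LinearOrder α] [OrderTopology α]
    [LinearOrder β] [OrderClosedTopology β] (hf : IsAutoregressive f)
    (hmono : StrictMonoInOwnCoord f) (hcont : Continuous f) {g : Y → ι → α}
    (hfg : Continuous (f ∘ g)) : Continuous g := by
  refine continuous_pi fun i => ?_
  induction i using WellFoundedLT.induction with
  | _ i ih =>
  have hupdate := hf.continuous_apply_update hcont ih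
  have hdiag : Continuous fun y => f (g y) i := (continuous_apply i).comp hfg
  have hbelow : ∀ y a, f (update (g y) i a) i < f (g y) i ↔ a < g y i := fun y a => by
    simpa only [update_eq_self] using (hmono (g y) i).lt_iff_lt (a := a) (b := g y i)
  have habove : ∀ y b, f (g y) i < f (update (g y) i b) i ↔ g y i < b := fun y b => by
    simpa only [update_eq_self] using (hmono (g y) i).lt_iff_lt (a := g y i) (b := b)
  refine continuous_iff_continuousAt.2 fun y₀ => tendsto_order.2 ⟨fun a ha => ?_, fun b hb => ?_⟩
  · filter_upwards [(isOpen_lt (hupdate a) hdiag).mem_nhds ((hbelow y₀ a).2 ha)] with y hy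
      using (hbelow y a).1 hy
  · filter_upwards [(isOpen_lt hdiag (hupdate b)).mem_nhds ((habove y₀ b).2 hb)] with y hy
      using (habove y b).1 hy

end IsAutoregressive

theorem autoregressive_inverse_is_autoregressive_general
    {m : ℕ} (f : (Fin m → ℝ) → (Fin m → ℝ))
    (hcont : Continuous f)
    (hauto : ∀ (x y : Fin m → ℝ) (i : Fin m),
      (∀ j : Fin m, j ≤ i → x j = y j) → f x i = f y i)
    (hmono : ∀ (x : Fin m → ℝ) (i : Fin m),
      StrictMono (fun t : ℝ => f (Function.update x i t) i)) :
    ∃ h : (Fin m → ℝ) ≃ₜ Set.range f,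
      (∀ x : Fin m → ℝ, (h x : Fin m → ℝ) = f x) ∧
      (∀ (y y' : Set.range f) (i : Fin m),
        (∀ j : Fin m, j ≤ i → (y : Fin m → ℝ) j = (y' : Fin m → ℝ) j) →
        h.symm y i = h.symm y' i) := by
  have hf : IsAutoregressive f := hauto
  have hmono : StrictMonoInOwnCoord f := hmono
  set e := Equiv.ofInjective f (hf.injective hmono)
  have hsection : ∀ y, f (e.symm y) = y := Equiv.apply_ofInjective_symm _
  have hsymm : Continuous fun y => e.symm y :=
    hf.continuous_of_continuous_comp hmono hcont <| by
      simpa only [comp_def, hsection] using continuous_subtype_val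
  refine ⟨⟨e, hcont.subtype_mk _, hsymm⟩, fun _ => rfl, fun y y' i hyy' => ?_⟩
  show e.symm y i = e.symm y' i
  exact hf.eq_of_forall_le_apply_eq hmono i fun j hj => by simpa only [hsection] using hyy' j hj

/-- If `f : ℝ^m → ℝ^m` is continuous, injective, and autoregressive with each
component strictly increasing in its own coordinate, then `f` is a
homeomorphism onto its image (range), and its inverse is also autoregressive:
the `i`-th component of the inverse depends only on coordinates `j ≤ i`. -/
theorem autoregressive_inverse_is_autoregressive
    {m : ℕ} (f : (Fin m → ℝ) → (Fin m → ℝ))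
    (hcont : Continuous f) (hinj : Function.Injective f)
    (hauto : ∀ (x y : Fin m → ℝ) (i : Fin m),
      (∀ j : Fin m, j ≤ i → x j = y j) → f x i = f y i)
    (hmono : ∀ (x : Fin m → ℝ) (i : Fin m),
      StrictMono (fun t : ℝ => f (Function.update x i t) i)) :
    ∃ h : (Fin m → ℝ) ≃ₜ Set.range f,
      (∀ x : Fin m → ℝ, (h x : Fin m → ℝ) = f x) ∧
      (∀ (y y' : Set.range f) (i : Fin m),
        (∀ j : Fin m, j ≤ i → (y : Fin m → ℝ) j = (y' : Fin m → ℝ) j) →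
        h.symm y i = h.symm y' i) :=
  autoregressive_inverse_is_autoregressive_general f hcont hauto hmono
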